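/- arXiv:1208.0682 — 2 statements merged into one kernel-verified Lean document; each statement's English description precedes it below -/
import Mathlib

section
/- Let α be an acceptable universal left-r.e. numbering. Then for every set B ⊆ ℕ, the index set {e : α_e = B} is not equal to B. -/
namespace LeftREPaper

/-- Lexicographic order on binary sequences: `X ≤lex Y` iff `X = Y` or the least point of
disagreement belongs to `Y`. -/
def BoolLexLE (X Y : ℕ → Bool) : Prop :=
  X = Y ∨ ∃ n, X n = false ∧ Y n = true ∧ ∀ m < n, X m = Y m

/-- Lexicographic order on sets of natural numbers (identified with their
characteristic sequences). -/
def SetLexLE (X Y : Set ℕ) : Prop :=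
  X = Y ∨ ∃ n, n ∉ X ∧ n ∈ Y ∧ ∀ m < n, (m ∈ X ↔ m ∈ Y)

/-- `a` is a left-r.e. approximation of the set `A`: uniformly recursive, lexicographically
monotone, and pointwise convergent to `A`. -/
def IsLeftREApprox (a : ℕ → ℕ → Bool) (A : Set ℕ) : Prop :=
  Computable₂ a ∧ (∀ s, BoolLexLE (a s) (a (s + 1))) ∧
    ∀ n, ∃ s₀, ∀ s, s₀ ≤ s → (a s n = true ↔ n ∈ A)

/-- A set is left-r.e. iff it has a left-r.e. approximation. -/
def LeftRE (A : Set ℕ) : Prop := ∃ a, IsLeftREApprox a A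

/-- A left-r.e. numbering: a map `e ↦ α e` together with a uniformly recursive,
lexicographically monotone approximation converging pointwise to `α e`. -/
structure LeftRENumbering where
  α : ℕ → Set ℕ
  approx : ℕ → ℕ → ℕ → Bool
  computable : Computable fun p : ℕ × ℕ × ℕ => approx p.1 p.2.1 p.2.2
  mono : ∀ e s, BoolLexLE (approx e s) (approx e (s + 1))
  lim : ∀ e n, ∃ s₀, ∀ s, s₀ ≤ s → (approx e s n = true ↔ n ∈ α e)

/-- A left-r.e. numbering is universal if every left-r.e. set occurs in it. -/
def LeftRENumbering.Universal (ν : LeftRENumbering) : Prop :=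
  ∀ A : Set ℕ, LeftRE A → ∃ e, ν.α e = A

/-- A class `C` of subsets of ℕ can be made into itself: some universal left-r.e.
numbering has the index set of `C` being itself a member of `C`. -/
def MadeIntoItself (C : Set (Set ℕ)) : Prop :=
  ∃ ν : LeftRENumbering, ν.Universal ∧ {e | ν.α e ∈ C} ∈ C

/-- recursively enumerable subsets of ℕ -/
def RE (A : Set ℕ) : Prop := REPred (· ∈ A)

/-- co-r.e. subsets of ℕ -/
def CoRE (A : Set ℕ) : Prop := REPred (· ∈ Aᶜ)

/-- recursive subsets of ℕ -/
def Rec (A : Set ℕ) : Prop := ComputablePred (· ∈ A)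

/-- `I` is (infinite and) indifferent for `A` with respect to the class `C`. -/
def Indifferent (I A : Set ℕ) (C : Set (Set ℕ)) : Prop :=
  I.Infinite ∧ ∀ X : Set ℕ, symmDiff X A ⊆ I → X ∈ C

/-- `A = {a₀ < a₁ < ⋯}` is retraceable by a total recursive function `f`,
i.e. `f (a_{n+1}) = a_n` (equivalently, on each element of `A` having a predecessor in `A`,
`f` returns that immediate predecessor). -/
def RecRetraceable (A : Set ℕ) : Prop :=
  ∃ f : ℕ → ℕ, Computable f ∧
    ∀ x ∈ A, ∀ y ∈ A, y < x → f x ∈ A ∧ f x < x ∧ y ≤ f x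

/-! ### Oracle computability -/

/-- Codes for oracle partial recursive functions: `Nat.Partrec.Code` plus an oracle query. -/
inductive OracleCode : Type
  | zero | succ | left | right | oracle
  | pair (cf cg : OracleCode)
  | comp (cf cg : OracleCode)
  | prec (cf cg : OracleCode)
  | rfind' (cf : OracleCode)

/-- Evaluation of an oracle code relative to an oracle `O : ℕ → ℕ`. -/
def OracleCode.eval (O : ℕ → ℕ) : OracleCode → ℕ →. ℕ
  | .zero => pure 0
  | .succ => Nat.succ
  | .left => ↑fun n : ℕ => n.unpair.1
  | .right => ↑fun n : ℕ => n.unpair.2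
  | .oracle => ↑fun n : ℕ => O n
  | .pair cf cg => fun n => Nat.pair <$> eval O cf n <*> eval O cg n
  | .comp cf cg => fun n => eval O cg n >>= eval O cf
  | .prec cf cg =>
    Nat.unpaired fun a n =>
      n.rec (eval O cf a) fun y IH => do
        let i ← IH
        eval O cg (Nat.pair a (Nat.pair y i))
  | .rfind' cf =>
    Nat.unpaired fun a m =>
      (Nat.rfind fun n => (fun m => m = 0) <$> eval O cf (Nat.pair a (n + m))).map (· + m)

/-- An effective coding of oracle codes by natural numbers. -/
def OracleCode.encode : OracleCode → ℕ
  | .zero => 0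
  | .succ => 1
  | .left => 2
  | .right => 3
  | .oracle => 4
  | .pair cf cg => 4 * Nat.pair cf.encode cg.encode + 5
  | .comp cf cg => 4 * Nat.pair cf.encode cg.encode + 6
  | .prec cf cg => 4 * Nat.pair cf.encode cg.encode + 7
  | .rfind' cf => 4 * Nat.pair cf.encode cf.encode + 8

/-- `f` is partial recursive relative to the oracle `O`. -/
def RecursiveIn (O : ℕ → ℕ) (f : ℕ →. ℕ) : Prop :=
  ∃ c : OracleCode, c.eval O = f

open Classical in
/-- The characteristic function of a set of naturals. -/
noncomputable def chi (A : Set ℕ) : ℕ → ℕ := fun n => if n ∈ A then 1 else 0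

/-- Turing reducibility between sets of naturals. -/
def TuringLE (A B : Set ℕ) : Prop :=
  RecursiveIn (chi B) fun n => Part.some (chi A n)

/-- The jump of an oracle: the diagonal halting problem relative to it. -/
def jumpSet (O : ℕ → ℕ) : Set ℕ :=
  {n | ∃ c : OracleCode, OracleCode.encode c = n ∧ (c.eval O n).Dom}

/-- The halting problem `K`. -/
def Kset : Set ℕ := jumpSet fun _ => 0

/-- A set is `K`-recursive if it is Turing reducible to the halting problem. -/
def KRecursiveSet (A : Set ℕ) : Prop := TuringLE A Kset

/-- A total function is `K`-recursive if it is recursive relative to the halting problem. -/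
def KRecursiveFun (f : ℕ → ℕ) : Prop :=
  RecursiveIn (chi Kset) fun n => Part.some (f n)

/-- A set `A` is low if its jump is Turing equivalent to the halting problem. -/
def Low (A : Set ℕ) : Prop :=
  TuringLE (jumpSet (chi A)) Kset ∧ TuringLE Kset (jumpSet (chi A))

/-- An acceptable left-r.e. numbering: every left-r.e. numbering reduces to it
via a total recursive function. -/
def LeftRENumbering.Acceptable (ν : LeftRENumbering) : Prop :=
  ∀ μ : LeftRENumbering, ∃ f : ℕ → ℕ, Computable f ∧ ∀ e, ν.α (f e) = μ.α e

/-- A `K`-acceptable left-r.e. numbering: every left-r.e. numbering reduces to it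
via a `K`-recursive total function. -/
def LeftRENumbering.KAcceptable (ν : LeftRENumbering) : Prop :=
  ∀ μ : LeftRENumbering, ∃ f : ℕ → ℕ, KRecursiveFun f ∧ ∀ e, ν.α (f e) = μ.α e

/-! ### Randomness and genericity -/

/-- The length-`n` prefix `A(0)A(1)…A(n-1)` of the characteristic sequence of `A`,
as a binary string. -/
noncomputable def charPrefix (A : Set ℕ) (n : ℕ) : List Bool :=
  (List.range n).map fun i => @decide (i ∈ A) (Classical.propDecidable _)

/-- A machine (partial map from binary strings to binary strings) is prefix-free if no two
distinct strings in its domain are comparable. -/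
def PrefixFreeMachine (ψ : List Bool →. List Bool) : Prop :=
  ∀ x y : List Bool, (ψ x).Dom → (ψ y).Dom → x <+: y → x = y

/-- A universal prefix-free machine: a partial recursive prefix-free machine with full range
which, up to an additive constant, simulates the complexity of every partial recursive
prefix-free machine. -/
def UniversalPFMachine (U : List Bool →. List Bool) : Prop :=
  Partrec U ∧ PrefixFreeMachine U ∧ (∀ x : List Bool, ∃ p, x ∈ U p) ∧
    ∀ ψ : List Bool →. List Bool, Partrec ψ → PrefixFreeMachine ψ →
      ∃ c, ∀ y x, x ∈ ψ y → ∃ p, x ∈ U p ∧ p.length ≤ y.length + c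

/-- `A` is Martin-Löf random: for a (any) universal prefix-free machine, the prefix-free
Kolmogorov complexity of `A↾n` is at least `n - c` for some constant `c`,
i.e. every `U`-program `p` for `A↾n` has `n ≤ |p| + c`. -/
def MLRandom (A : Set ℕ) : Prop :=
  ∀ U : List Bool →. List Bool, UniversalPFMachine U →
    ∃ c, ∀ n p, charPrefix A n ∈ U p → n ≤ p.length + c

/-- `A` is 1-generic: for every r.e. set `W` of binary strings, either some prefix of `A`
belongs to `W` or some prefix of `A` has no extension in `W`. -/
def OneGeneric (A : Set ℕ) : Prop :=
  ∀ W : Set (List Bool), REPred (· ∈ W) →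
    (∃ n, charPrefix A n ∈ W) ∨ ∃ n, ∀ τ ∈ W, ¬ charPrefix A n <+: τ

/-- A set of binary strings is dense if every binary string has an extension in it. -/
def DenseStrings (W : Set (List Bool)) : Prop :=
  ∀ σ : List Bool, ∃ τ ∈ W, σ <+: τ

/-- `A` is weakly 1-generic: every dense r.e. set of binary strings contains a prefix of `A`. -/
def WeaklyOneGeneric (A : Set ℕ) : Prop :=
  ∀ W : Set (List Bool), REPred (· ∈ W) → DenseStrings W →
    ∃ n, charPrefix A n ∈ W

/-- The set `σ·X` whose characteristic sequence is the string `σ` followed by the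
characteristic sequence of `X`. -/
def prependStr (σ : List Bool) (X : Set ℕ) : Set ℕ :=
  {n | (n < σ.length ∧ σ.getD n false = true) ∨ (σ.length ≤ n ∧ n - σ.length ∈ X)}

/-! ### Inclusion modulo finite sets -/

/-- `A ⊆* B`: all but finitely many elements of `A` belong to `B`. -/
def SubsetStar (A B : Set ℕ) : Prop := (A \ B).Finite

/-- `A ⊂* B`: `A ⊆* B` and `B - A` is infinite. -/
def SSubsetStar (A B : Set ℕ) : Prop := SubsetStar A B ∧ (B \ A).Infinite

/-- A minimal left-r.e. set. -/
def MinimalLeftRE (A : Set ℕ) : Prop :=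
  LeftRE A ∧ SSubsetStar ∅ A ∧ ¬ ∃ E : Set ℕ, LeftRE E ∧ SSubsetStar ∅ E ∧ SSubsetStar E A

/-- A maximal left-r.e. set. -/
def MaximalLeftRE (B : Set ℕ) : Prop :=
  LeftRE B ∧ SSubsetStar B Set.univ ∧
    ¬ ∃ E : Set ℕ, LeftRE E ∧ SSubsetStar B E ∧ SSubsetStar E Set.univ

/-!
Suppose `B = {e | ν.α e = B}`. Acceptable numberings are universal, so `∅` has an index, and
`B ≠ ∅`; then `B = ν.α b` for any `b ∈ B` is left-r.e. For such `B` there is a left-r.e.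
numbering `μ` with `μ.α p = B` iff the `p`-th computation on input `0` halts with a value outside
`B`: the `p`-th set follows the approximation of `B`, truncated to the number of stages at which
such a halting value has been guessed so far. If these stages recur forever the limit is `B`;
otherwise it is finite, and even empty when `B` is finite (then `B` is decidable, so no false
guess is ever made). Translating `μ` into `ν` by a computable `f` and applying the recursion
theorem gives `p` whose computation outputs `f p`, and then
`f p ∈ B ↔ ν.α (f p) = B ↔ μ.α p = B ↔ f p ∉ B`.
-/

open Filter Nat.Partrec

theorem boolLexLE_iff_toLex_le {X Y : ℕ → Bool} : BoolLexLE X Y ↔ toLex X ≤ toLex Y := by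
  rw [le_iff_lt_or_eq, toLex_inj, BoolLexLE, or_comm]
  exact or_congr_left ⟨fun ⟨n, hX, hY, hagree⟩ => ⟨n, hagree, Bool.lt_iff.mpr ⟨hX, hY⟩⟩,
    fun ⟨n, hagree, hn⟩ => ⟨n, (Bool.lt_iff.mp hn).1, (Bool.lt_iff.mp hn).2, hagree⟩⟩

theorem toLex_and_le_toLex_and {X Y : ℕ → Bool} (h : toLex X ≤ toLex Y) (t : ℕ) :
    toLex (fun n => decide (n < t) && X n) ≤ toLex (fun n => decide (n < t) && Y n) := by
  rcases h.lt_or_eq with ⟨i, hagree, hi⟩ | heq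
  · have hagree : ∀ j < i, X j = Y j := hagree
    by_cases hit : i < t
    · exact le_of_lt ⟨i, fun j hj => by simp [hagree j hj], by simpa [hit] using hi⟩
    · refine le_of_eq (congrArg toLex (funext fun n => ?_))
      by_cases hnt : n < t
      · simp [hnt, hagree n (by omega)]
      · simp [hnt]
  · rw [toLex_inj.mp heq]

def truncStage (a : ℕ → ℕ → Bool) (t : ℕ) : ℕ → Bool := fun n => decide (n < t) && a t n

theorem monotone_toLex_truncStage {a : ℕ → ℕ → Bool} (ha : ∀ s, BoolLexLE (a s) (a (s + 1))) :
    Monotone fun t => toLex (truncStage a t) := by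
  refine monotone_nat_of_le_succ fun t => ?_
  calc toLex (truncStage a t)
      ≤ toLex fun n => decide (n < t) && a (t + 1) n :=
        toLex_and_le_toLex_and (boolLexLE_iff_toLex_le.mp (ha t)) t
    _ ≤ toLex (truncStage a (t + 1)) :=
        Pi.toLex_monotone fun n => Bool.le_iff_imp.mpr fun h => by simp_all [truncStage]; omega

theorem eventually_truncStage_iff {a : ℕ → ℕ → Bool} {B : Set ℕ}
    (ha : ∀ n, ∀ᶠ s in atTop, (a s n = true ↔ n ∈ B)) (n : ℕ) :
    ∀ᶠ t in atTop, (truncStage a t n = true ↔ n ∈ B) :=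
  ((ha n).and (eventually_gt_atTop n)).mono fun t ⟨h, hnt⟩ => by simpa [truncStage, hnt] using h

def hitCount (D : ℕ → Bool) : ℕ → ℕ
  | 0 => 0
  | s + 1 => hitCount D s + (D s).toNat

theorem monotone_hitCount (D : ℕ → Bool) : Monotone (hitCount D) :=
  monotone_nat_of_le_succ fun _ => Nat.le_add_right _ _

theorem hitCount_le (D : ℕ → Bool) (s : ℕ) : hitCount D s ≤ s := by
  induction s with
  | zero => rfl
  | succ s ih => have := Bool.toNat_le (D s); simp only [hitCount]; omega

theorem hitCount_eq_of_forall_ge {D : ℕ → Bool} {N : ℕ} (h : ∀ t ≥ N, D t = false) {s : ℕ}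
    (hs : N ≤ s) : hitCount D s = hitCount D N := by
  induction s, hs using Nat.le_induction with
  | base => rfl
  | succ s hs ih => simp [hitCount, h s hs, ih]

theorem tendsto_hitCount {D : ℕ → Bool} (h : ∃ᶠ t in atTop, D t = true) :
    Tendsto (hitCount D) atTop atTop := by
  refine tendsto_atTop_atTop_of_monotone (monotone_hitCount D) fun k => ?_
  induction k with
  | zero => exact ⟨0, Nat.zero_le _⟩
  | succ k ih =>
    obtain ⟨s, hs⟩ := ih
    obtain ⟨t, hst, ht⟩ := frequently_atTop.mp h s
    exact ⟨t + 1, by simpa [hitCount, ht] using hs.trans (monotone_hitCount D hst)⟩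

theorem computable₂_hitCount {D : ℕ → ℕ → Bool} (hD : Computable₂ D) :
    Computable₂ fun p s => hitCount (D p) s := by
  refine (Computable.nat_rec Computable.snd (Computable.const 0) (Computable.to₂
    ((Primrec.nat_add.to_comp).comp (Computable.snd.comp Computable.snd)
      (Computable.cond (hD.comp (Computable.fst.comp Computable.fst)
        (Computable.fst.comp Computable.snd)) (Computable.const 1) (Computable.const 0))))).of_eq
    fun q => ?_
  induction q.2 with
  | zero => rfl
  | succ s ih => simp only [hitCount, ← ih]; cases D q.1 s <;> rfl

theorem IsLeftREApprox.eventually_iff {a : ℕ → ℕ → Bool} {B : Set ℕ} (ha : IsLeftREApprox a B)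
    (n : ℕ) : ∀ᶠ s in atTop, (a s n = true ↔ n ∈ B) :=
  eventually_atTop.mpr (ha.2.2 n)

theorem eventually_true_iff {f : ℕ → Bool} {P : Prop} (h : ∀ᶠ s in atTop, (f s = true ↔ P)) :
    (∀ᶠ s in atTop, f s = true) ↔ P :=
  ⟨fun hf => (h.and hf).exists.elim fun _ hs => hs.1.mp hs.2,
    fun hP => h.mono fun _ hs => hs.mpr hP⟩

section CounterNumbering

variable {a : ℕ → ℕ → Bool} {B : Set ℕ} {D : ℕ → ℕ → Bool} {p N : ℕ}

def counterApprox (a D : ℕ → ℕ → Bool) (p s : ℕ) : ℕ → Bool :=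
  truncStage a (hitCount (D p) s)

theorem eventually_counterApprox_iff_of_frequently (ha : IsLeftREApprox a B)
    (h : ∃ᶠ t in atTop, D p t = true) (n : ℕ) :
    ∀ᶠ s in atTop, (counterApprox a D p s n = true ↔ n ∈ B) :=
  (tendsto_hitCount h).eventually (eventually_truncStage_iff ha.eventually_iff n)

theorem counterApprox_eq_of_forall_ge (h : ∀ t ≥ N, D p t = false) {s : ℕ} (hs : N ≤ s) :
    counterApprox a D p s = counterApprox a D p N := by
  rw [counterApprox, counterApprox, hitCount_eq_of_forall_ge h hs]

theorem exists_eventually_counterApprox_iff (ha : IsLeftREApprox a B) (p n : ℕ) :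
    ∃ P : Prop, ∀ᶠ s in atTop, (counterApprox a D p s n = true ↔ P) := by
  by_cases h : ∃ᶠ t in atTop, D p t = true
  · exact ⟨_, eventually_counterApprox_iff_of_frequently ha h n⟩
  · obtain ⟨N, hN⟩ := eventually_atTop.mp (not_frequently.mp h)
    refine ⟨counterApprox a D p N n = true, eventually_atTop.mpr ⟨N, fun s hs => ?_⟩⟩
    rw [counterApprox_eq_of_forall_ge (fun t ht => by simpa using hN t ht) hs]

theorem computable_counterApprox (ha : IsLeftREApprox a B) (hD : Computable₂ D) :
    Computable fun q : ℕ × ℕ × ℕ => counterApprox a D q.1 q.2.1 q.2.2 := by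
  have hu : Computable fun q : ℕ × ℕ × ℕ => hitCount (D q.1) q.2.1 :=
    (computable₂_hitCount hD).comp Computable.fst (Computable.fst.comp Computable.snd)
  exact (Primrec.and.to_comp).comp
    ((Primrec.nat_lt.decide.to_comp).comp (Computable.snd.comp Computable.snd) hu)
    (ha.1.comp hu (Computable.snd.comp Computable.snd))

def counterNumbering (ha : IsLeftREApprox a B) (hD : Computable₂ D) : LeftRENumbering where
  α p := {n | ∀ᶠ s in atTop, counterApprox a D p s n = true}
  approx := counterApprox a D
  computable := computable_counterApprox ha hD
  mono p s := boolLexLE_iff_toLex_le.mpr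
    (monotone_toLex_truncStage ha.2.1 (monotone_hitCount (D p) s.le_succ))
  lim p n := by
    obtain ⟨P, hP⟩ := exists_eventually_counterApprox_iff ha p n
    obtain ⟨s₀, hs₀⟩ := eventually_atTop.mp hP
    exact ⟨s₀, fun s hs => (hs₀ s hs).trans (eventually_true_iff hP).symm⟩

theorem counterNumbering_α_of_frequently (ha : IsLeftREApprox a B) (hD : Computable₂ D)
    (h : ∃ᶠ t in atTop, D p t = true) : (counterNumbering ha hD).α p = B :=
  Set.ext fun n => eventually_true_iff (eventually_counterApprox_iff_of_frequently ha h n)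

theorem counterNumbering_α_subset (ha : IsLeftREApprox a B) (hD : Computable₂ D)
    (h : ∀ t ≥ N, D p t = false) : (counterNumbering ha hD).α p ⊆ Set.Iio N := by
  intro n hn
  obtain ⟨s, hs, hNs⟩ := (hn.and (eventually_ge_atTop N)).exists
  rw [counterApprox_eq_of_forall_ge h hNs, counterApprox, truncStage, Bool.and_eq_true,
    decide_eq_true_eq] at hs
  exact hs.1.trans_le (hitCount_le _ _)

end CounterNumbering

section HaltsOutside

open Nat.Partrec.Code

variable {B : Set ℕ} {χ : ℕ → ℕ → Bool} {p : ℕ}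

def HaltsOutside (B : Set ℕ) (p : ℕ) : Prop :=
  ∃ v ∈ (Denumerable.ofNat Code p).eval 0, v ∉ B

/-- `χ t` is the stage-`t` guess at the characteristic function of `B`. -/
def haltsOutsideStage (χ : ℕ → ℕ → Bool) (p t : ℕ) : Bool :=
  (evaln t (Denumerable.ofNat Code p) 0).any fun v => !χ t v

theorem computable₂_haltsOutsideStage (hχ : Computable₂ χ) :
    Computable₂ (haltsOutsideStage χ) := by
  have hevaln : Computable fun q : ℕ × ℕ => evaln q.2 (Denumerable.ofNat Code q.1) 0 :=
    (primrec_evaln.comp (((Primrec.snd.pair ((Primrec.ofNat Code).comp Primrec.fst))).pair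
      (Primrec.const 0))).to_comp
  refine (Computable.option_casesOn hevaln (Computable.const false) (Computable.to₂
    (Primrec.not.to_comp.comp (hχ.comp (Computable.snd.comp Computable.fst)
      Computable.snd)))).of_eq fun q => ?_
  simp only [haltsOutsideStage]
  cases evaln q.2 (Denumerable.ofNat Code q.1) 0 <;> rfl

theorem haltsOutside_iff_of_mem {v : ℕ} (hv : v ∈ (Denumerable.ofNat Code p).eval 0) :
    HaltsOutside B p ↔ v ∉ B :=
  ⟨fun ⟨_, hw, hwB⟩ => Part.mem_unique hv hw ▸ hwB, fun hvB => ⟨v, hv, hvB⟩⟩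

theorem eventually_haltsOutsideStage_iff (hχ : ∀ v, ∀ᶠ t in atTop, (χ t v = true ↔ v ∈ B))
    (p : ℕ) : ∀ᶠ t in atTop, (haltsOutsideStage χ p t = true ↔ HaltsOutside B p) := by
  by_cases hdom : ∃ v, v ∈ (Denumerable.ofNat Code p).eval 0
  · obtain ⟨v, hv⟩ := hdom
    obtain ⟨k, hk⟩ := evaln_complete.mp hv
    filter_upwards [eventually_ge_atTop k, hχ v] with t hkt hχt
    rw [haltsOutsideStage, Option.mem_def.mp (evaln_mono hkt hk), haltsOutside_iff_of_mem hv]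
    simp [← hχt]
  · refine Eventually.of_forall fun t => iff_of_false ?_ fun ⟨v, hv, _⟩ => hdom ⟨v, hv⟩
    cases hev : evaln t (Denumerable.ofNat Code p) 0 with
    | none => simp [haltsOutsideStage, hev]
    | some v => exact absurd ⟨v, evaln_sound (Option.mem_def.mpr hev)⟩ hdom

theorem haltsOutside_of_haltsOutsideStage (hχ : ∀ t v, χ t v = true ↔ v ∈ B) {t : ℕ}
    (h : haltsOutsideStage χ p t = true) : HaltsOutside B p := by
  rw [haltsOutsideStage, Option.any_eq_true] at h
  obtain ⟨v, hv, hvB⟩ := h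
  exact ⟨v, evaln_sound hv, fun hvB' => by simp [(hχ t v).mpr hvB'] at hvB⟩

theorem exists_haltsOutside_iff (B : Set ℕ) {f : ℕ → ℕ} (hf : Computable f) :
    ∃ p, HaltsOutside B p ↔ f p ∉ B := by
  have hf' : Computable₂ fun (c : Code) (_ : ℕ) => f (Encodable.encode c) :=
    (hf.comp (Computable.encode.comp Computable.fst)).to₂
  obtain ⟨c, hc⟩ := fixed_point₂ hf'.partrec₂
  exact ⟨Encodable.encode c,
    haltsOutside_iff_of_mem (by rw [Denumerable.ofNat_encode, hc]; exact Part.mem_some _)⟩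

end HaltsOutside

theorem exists_computable_iff_mem_of_finite {B : Set ℕ} (hB : B.Finite) :
    ∃ g : ℕ → Bool, Computable g ∧ ∀ v, g v = true ↔ v ∈ B := by
  induction B, hB using Set.Finite.induction_on with
  | empty => exact ⟨fun _ => false, Computable.const false, by simp⟩
  | @insert a s _ _ ih =>
    obtain ⟨g, hgc, hg⟩ := ih
    refine ⟨fun v => decide (v = a) || g v, ?_, by simp [hg]⟩
    exact Primrec.or.to_comp.comp
      (Primrec.eq.decide.to_comp.comp Computable.id (Computable.const a)) hgc

theorem counterNumbering_haltsOutsideStage_α_of_haltsOutside {a : ℕ → ℕ → Bool} {B : Set ℕ}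
    (ha : IsLeftREApprox a B) {χ : ℕ → ℕ → Bool} (hχc : Computable₂ χ)
    (hχ : ∀ v, ∀ᶠ t in atTop, (χ t v = true ↔ v ∈ B)) {p : ℕ} (hp : HaltsOutside B p) :
    (counterNumbering ha (computable₂_haltsOutsideStage hχc)).α p = B :=
  counterNumbering_α_of_frequently ha _
    ((eventually_haltsOutsideStage_iff hχ p).mono fun _ h => h.mpr hp).frequently

theorem exists_numbering_α_eq_iff_haltsOutside {B : Set ℕ} (hB : LeftRE B) (hne : B.Nonempty) :
    ∃ μ : LeftRENumbering, ∀ p, μ.α p = B ↔ HaltsOutside B p := by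
  obtain ⟨a, ha⟩ := hB
  rcases B.finite_or_infinite with hfin | hinf
  · -- A finite limit might be `B` itself, so here the guesses are exact and the counter of a
    -- non-halting-outside `p` never moves.
    obtain ⟨g, hgc, hg⟩ := exists_computable_iff_mem_of_finite hfin
    have hχc : Computable₂ fun (_ : ℕ) => g := (hgc.comp Computable.snd).to₂
    refine ⟨counterNumbering ha (computable₂_haltsOutsideStage hχc), fun p =>
      ⟨fun hα => ?_, counterNumbering_haltsOutsideStage_α_of_haltsOutside ha hχc
        (fun v => Eventually.of_forall fun _ => hg v)⟩⟩
    by_contra hp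
    have hempty : B ⊆ Set.Iio 0 := hα ▸ counterNumbering_α_subset ha _ fun t _ =>
      Bool.eq_false_iff.mpr fun h => hp (haltsOutside_of_haltsOutsideStage (fun _ => hg) h)
    obtain ⟨b, hb⟩ := hne
    exact Nat.not_lt_zero b (hempty hb)
  · refine ⟨counterNumbering ha (computable₂_haltsOutsideStage ha.1), fun p =>
      ⟨fun hα => ?_, counterNumbering_haltsOutsideStage_α_of_haltsOutside ha ha.1
        ha.eventually_iff⟩⟩
    by_contra hp
    obtain ⟨N, hN⟩ := eventually_atTop.mp
      ((eventually_haltsOutsideStage_iff ha.eventually_iff p).mono fun _ h => by simpa [hp] using h)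
    exact hinf ((Set.finite_Iio N).subset
      (hα ▸ counterNumbering_α_subset ha (computable₂_haltsOutsideStage ha.1) hN))

theorem leftRE_empty : LeftRE ∅ :=
  ⟨fun _ _ => false, Computable.const false, fun _ => Or.inl rfl, fun _ => ⟨0, by simp⟩⟩

theorem LeftRENumbering.leftRE_α (ν : LeftRENumbering) (e : ℕ) : LeftRE (ν.α e) :=
  ⟨ν.approx e, ν.computable.comp ((Computable.const e).pair Computable.id), ν.mono e, ν.lim e⟩

theorem LeftRENumbering.Acceptable.universal {ν : LeftRENumbering} (hacc : ν.Acceptable) :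
    ν.Universal := by
  rintro A ⟨a, hac, hmono, hlim⟩
  obtain ⟨f, -, hf⟩ := hacc ⟨fun _ => A, fun _ => a,
    hac.comp (Computable.fst.comp Computable.snd) (Computable.snd.comp Computable.snd),
    fun _ => hmono, fun _ => hlim⟩
  exact ⟨f 0, hf 0⟩

theorem statement_10_general (ν : LeftRENumbering) (hacc : ν.Acceptable)
    (B : Set ℕ) : {e | ν.α e = B} ≠ B := by
  intro hB
  have mem_iff : ∀ e, e ∈ B ↔ ν.α e = B := fun e => (Set.ext_iff.mp hB e).symm
  rcases B.eq_empty_or_nonempty with rfl | ⟨b, hb⟩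
  · obtain ⟨e, he⟩ := hacc.universal ∅ leftRE_empty
    exact (mem_iff e).mpr he
  · obtain ⟨μ, hμ⟩ :=
      exists_numbering_α_eq_iff_haltsOutside ((mem_iff b).mp hb ▸ ν.leftRE_α b) ⟨b, hb⟩
    obtain ⟨f, hf, hνμ⟩ := hacc μ
    obtain ⟨p, hp⟩ := exists_haltsOutside_iff B hf
    have : f p ∈ B ↔ f p ∉ B :=
      calc f p ∈ B ↔ ν.α (f p) = B := mem_iff (f p)
        _ ↔ μ.α p = B := by rw [hνμ]
        _ ↔ HaltsOutside B p := hμ p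
        _ ↔ f p ∉ B := hp
    exact iff_not_self this

/-- In an acceptable universal left-r.e. numbering no set equals its own
index set. -/
theorem statement_10 (ν : LeftRENumbering) (huniv : ν.Universal) (hacc : ν.Acceptable)
    (B : Set ℕ) : {e | ν.α e = B} ≠ B :=
  statement_10_general ν hacc B

end LeftREPaper
end

section
/- No recursively enumerable set is a maximal left-r.e. set. -/
namespace LeftREPaper

/-!
Let `A` be r.e. with infinite complement. Call the elements of `Aᶜ` holes, and let `E` be `A`
together with every other hole (those with an even number of holes below them).
Then `A ⊂* E ⊂* ℕ`.
`E` is left-r.e.: apply the same construction to the stages `A_s` of an enumeration of `A`.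
When `A_s` grows, the first change of the approximation to `E` is from `0` to `1`: if the first
new element `d` of `A` was an unfilled hole, `d` enters; if it was filled, the next hole above
`d` changes parity and enters.
-/

/-- `holeParity f n` is the parity of the number of `m < n` with `f m = false`. -/
def holeParity (f : ℕ → Bool) : ℕ → Bool
  | 0 => false
  | n + 1 => holeParity f n ^^ !f n

def fillEvenHoles (f : ℕ → Bool) (n : ℕ) : Bool := f n || !holeParity f n

@[simp] lemma holeParity_succ (f : ℕ → Bool) (n : ℕ) :
    holeParity f (n + 1) = (holeParity f n ^^ !f n) := rfl

lemma holeParity_congr {f g : ℕ → Bool} {n : ℕ} (h : ∀ m < n, f m = g m) :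
    holeParity f n = holeParity g n := by
  induction n with
  | zero => rfl
  | succ n ih => simp only [holeParity_succ, ih fun m hm => h m (by omega), h n (by omega)]

lemma fillEvenHoles_congr {f g : ℕ → Bool} {n : ℕ} (h : ∀ m ≤ n, f m = g m) :
    fillEvenHoles f n = fillEvenHoles g n := by
  simp only [fillEvenHoles, h n le_rfl, holeParity_congr fun m hm => h m hm.le]

lemma holeParity_eq_of_forall_true {f : ℕ → Bool} {a b : ℕ} (hab : a ≤ b)
    (h : ∀ m, a ≤ m → m < b → f m = true) : holeParity f b = holeParity f a := by
  induction b, hab using Nat.le_induction with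
  | base => rfl
  | succ b hab ih =>
    simp [h b hab (by omega), ih fun m h₁ h₂ => h m h₁ (by omega)]

lemma exists_next_hole {f : ℕ → Bool} {c : ℕ} (hf : ∃ m, c < m ∧ f m = false) :
    ∃ c', c < c' ∧ f c' = false ∧ ∀ m, c < m → m < c' → f m = true := by
  classical
  refine ⟨Nat.find hf, (Nat.find_spec hf).1, (Nat.find_spec hf).2, fun m h₁ h₂ => ?_⟩
  simpa [h₁] using Nat.find_min hf h₂

lemma holeParity_next_hole {f : ℕ → Bool} {c c' : ℕ} (hc : f c = false) (hcc' : c < c')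
    (h : ∀ m, c < m → m < c' → f m = true) : holeParity f c' = !holeParity f c := by
  rw [holeParity_eq_of_forall_true hcc' fun m h₁ h₂ => h m (by omega) h₂, holeParity_succ, hc]
  simp

/-- Consecutive holes are filled alternately. -/
lemma infinite_setOf_hole_fillEvenHoles_eq {f : ℕ → Bool}
    (hf : ∀ d, ∃ m, d < m ∧ f m = false) (b : Bool) :
    {n | f n = false ∧ fillEvenHoles f n = b}.Infinite := by
  refine Set.infinite_of_forall_exists_gt fun k => ?_
  obtain ⟨c, hkc, hc⟩ := hf k
  obtain ⟨c', hcc', hc', hbetween⟩ := exists_next_hole (hf c)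
  have hpar := holeParity_next_hole hc hcc' hbetween
  by_cases hb : fillEvenHoles f c = b
  · exact ⟨c, ⟨hc, hb⟩, hkc⟩
  · refine ⟨c', ⟨hc', ?_⟩, hkc.trans hcc'⟩
    revert hb
    cases b <;> simp_all [fillEvenHoles]

lemma boolLexLE_fillEvenHoles {f g : ℕ → Bool} (hfg : ∀ m, f m = true → g m = true)
    (hf : ∀ d, ∃ m, d < m ∧ f m = false) : BoolLexLE (fillEvenHoles f) (fillEvenHoles g) := by
  classical
  by_cases hfg' : f = g
  · exact Or.inl (congrArg fillEvenHoles hfg')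
  obtain ⟨d, hd, hbelow⟩ : ∃ d, f d ≠ g d ∧ ∀ m < d, f m = g m := by
    have hex : ∃ d, f d ≠ g d := Function.ne_iff.1 hfg'
    exact ⟨Nat.find hex, Nat.find_spec hex, fun m hm => not_not.1 (Nat.find_min hex hm)⟩
  obtain ⟨hfd, hgd⟩ : f d = false ∧ g d = true := by
    cases h₁ : f d
    · cases h₂ : g d
      · exact absurd (h₁.trans h₂.symm) hd
      · exact ⟨rfl, rfl⟩
    · exact absurd (h₁.trans (hfg d h₁).symm) hd
  have hfill_below : ∀ m < d, fillEvenHoles f m = fillEvenHoles g m :=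
    fun m hm => fillEvenHoles_congr fun k hk => hbelow k (by omega)
  cases hp : holeParity f d
  · -- `d` is filled on both sides; the first difference is the next hole of `f` above `d`.
    obtain ⟨c', hdc', hc', hbetween⟩ := exists_next_hole (hf d)
    have hpf : holeParity f c' = true := by
      rw [holeParity_next_hole hfd hdc' hbetween, hp]; rfl
    have hpg : holeParity g c' = false := by
      rw [holeParity_eq_of_forall_true (a := d + 1) hdc'
          fun m h₁ h₂ => hfg m (hbetween m (by omega) h₂),
        holeParity_succ, hgd, ← holeParity_congr hbelow, hp]
      rfl
    refine Or.inr ⟨c', by simp [fillEvenHoles, hc', hpf], by simp [fillEvenHoles, hpg],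
      fun m hm => ?_⟩
    rcases lt_trichotomy m d with h | rfl | h
    · exact hfill_below m h
    · simp [fillEvenHoles, hp, hgd]
    · simp [fillEvenHoles, hbetween m h hm, hfg m (hbetween m h hm)]
  · exact Or.inr ⟨d, by simp [fillEvenHoles, hfd, hp], by simp [fillEvenHoles, hgd],
      hfill_below⟩

lemma primrec₂_fillEvenHoles {q : ℕ → ℕ → Bool} (hq : Primrec₂ q) :
    Primrec₂ fun s n => fillEvenHoles (q s) n := by
  have hstep : Primrec₂ fun s (p : ℕ × Bool) => p.2 ^^ !q s p.1 :=
    (Primrec.dom_bool₂ xor).comp (Primrec.snd.comp Primrec.snd)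
      (Primrec.not.comp (hq.comp Primrec.fst (Primrec.fst.comp Primrec.snd)))
  have hpar : Primrec₂ fun s n => holeParity (q s) n := by
    refine (Primrec.nat_rec (Primrec.const false) hstep).of_eq fun s n => ?_
    induction n with
    | zero => rfl
    | succ n ih => simp only [holeParity_succ, ← ih]
  exact Primrec.or.comp hq (Primrec.not.comp₂ hpar)

lemma RE.exists_primrec_stages {A : Set ℕ} (hA : RE A) :
    ∃ q : ℕ → ℕ → Bool, Primrec₂ q ∧ (∀ {s t n}, s ≤ t → q s n = true → q t n = true) ∧
      (∀ {s n}, q s n = true → n < s) ∧ ∀ n, n ∈ A ↔ ∃ s, q s n = true := by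
  have hpartrec : Partrec fun n : ℕ =>
      (Part.assert (n ∈ A) fun _ => Part.some ()).map fun _ => (0 : ℕ) :=
    Partrec.map hA (Computable.const 0).to₂
  obtain ⟨c, hc⟩ := Nat.Partrec.Code.exists_code.1 (Partrec.nat_iff.1 hpartrec)
  refine ⟨fun s n => (Nat.Partrec.Code.evaln s c n).isSome, ?_, ?_, ?_, fun n => ?_⟩
  · exact Primrec.option_isSome.comp
      (Nat.Partrec.Code.primrec_evaln.comp ((Primrec.fst.pair (Primrec.const c)).pair Primrec.snd))
  · intro s t n hst h
    obtain ⟨x, hx⟩ := Option.isSome_iff_exists.1 h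
    exact Option.isSome_iff_exists.2 ⟨x, Nat.Partrec.Code.evaln_mono hst hx⟩
  · intro s n h
    obtain ⟨x, hx⟩ := Option.isSome_iff_exists.1 h
    exact Nat.Partrec.Code.evaln_bound hx
  · have hdom : (Nat.Partrec.Code.eval c n).Dom ↔ n ∈ A := by
      rw [hc]
      exact ⟨fun h => h.1, fun h => ⟨h, trivial⟩⟩
    simp only [← hdom, Part.dom_iff_mem, Nat.Partrec.Code.evaln_complete, Option.isSome_iff_exists]
    exact ⟨fun ⟨x, k, hk⟩ => ⟨k, x, hk⟩, fun ⟨k, x, hk⟩ => ⟨x, k, hk⟩⟩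

lemma leftRE_setOf_fillEvenHoles {χ : ℕ → Bool} (hχ : RE {n | χ n = true}) :
    LeftRE {n | fillEvenHoles χ n = true} := by
  obtain ⟨q, hq, hmono, hbound, hspec⟩ := hχ.exists_primrec_stages
  have hconv : ∀ m, ∃ t, ∀ s, t ≤ s → q s m = χ m := by
    intro m
    cases hm : χ m
    · refine ⟨0, fun s _ => ?_⟩
      cases h : q s m
      · rfl
      · simpa [hm] using (hspec m).2 ⟨s, h⟩
    · obtain ⟨t, ht⟩ := (hspec m).1 hm
      exact ⟨t, fun s hs => hmono hs ht⟩
  choose t ht using hconv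
  refine ⟨fun s => fillEvenHoles (q s), (primrec₂_fillEvenHoles hq).to_comp, fun s => ?_,
    fun n => ⟨(Finset.range (n + 1)).sup t, fun s hs => ?_⟩⟩
  · refine boolLexLE_fillEvenHoles (fun m => hmono s.le_succ) fun d => ⟨d + s + 1, by omega, ?_⟩
    cases h : q s (d + s + 1)
    · rfl
    · exact absurd (hbound h) (by omega)
  · show fillEvenHoles (q s) n = true ↔ fillEvenHoles χ n = true
    rw [fillEvenHoles_congr fun m hm =>
      ht m s ((Finset.le_sup (Finset.mem_range.2 (by omega : m < n + 1))).trans hs)]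

/-- No r.e. set is a maximal left-r.e. set. -/
theorem statement_14 (A : Set ℕ) (hA : RE A) : ¬ MaximalLeftRE A := by
  classical
  rintro ⟨-, ⟨-, hcoinf⟩, hmax⟩
  set χ : ℕ → Bool := fun n => decide (n ∈ A)
  have hχ : {n | χ n = true} = A := by ext; simp [χ]
  have hholes : ∀ d, ∃ m, d < m ∧ χ m = false := fun d => by
    obtain ⟨m, hm, hdm⟩ := hcoinf.exists_gt d
    exact ⟨m, hdm, by simpa [χ] using hm⟩
  set E := {n | fillEvenHoles χ n = true}
  have hAE : A ⊆ E := fun n hn => by simp [E, fillEvenHoles, χ, hn]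
  refine hmax ⟨E, leftRE_setOf_fillEvenHoles (hχ ▸ hA), ⟨?_, ?_⟩, ⟨?_, ?_⟩⟩
  · simp [SubsetStar, Set.sdiff_eq_empty.2 hAE]
  · refine (infinite_setOf_hole_fillEvenHoles_eq hholes true).mono ?_
    rintro n ⟨hn, hnE⟩
    exact ⟨hnE, by simpa [χ] using hn⟩
  · simp [SubsetStar]
  · refine (infinite_setOf_hole_fillEvenHoles_eq hholes false).mono ?_
    rintro n ⟨-, hnE⟩
    exact ⟨trivial, by simp [E, hnE]⟩

end LeftREPaper
end
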